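/- If F is an idempotent filter in an inverse ∧-semigroup S (a filter that is an inverse subsemigroup), then E(F), the set of idempotents in F, is a filter in the semilattice E(S) of idempotents, and F = E(F)↑. Moreover F is an ultrafilter in S if and only if E(F) is an ultrafilter in E(S). -/

import Mathlib

/-- An inverse semigroup with zero whose natural partial order has binary meets
(an inverse ∧-semigroup with zero). The order `≤` is required to coincide with
the natural partial order: `a ≤ b ↔ a = b * (a⁻¹ * a)`. -/
class InverseMeetSemigroup (S : Type*) extends Semigroup S, Zero S, Inv S, SemilatticeInf S where
  mul_inv_mul : ∀ a : S, a * a⁻¹ * a = a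
  inv_mul_inv : ∀ a : S, a⁻¹ * a * a⁻¹ = a⁻¹
  idem_comm : ∀ e f : S, e * e = e → f * f = f → e * f = f * e
  zero_mul : ∀ a : S, (0 : S) * a = 0
  mul_zero : ∀ a : S, a * (0 : S) = 0
  le_iff : ∀ a b : S, a ≤ b ↔ a = b * (a⁻¹ * a)

variable {S : Type*} [InverseMeetSemigroup S]

/-- The Lenz arrow relation: `a → b` iff every nonzero `x ≤ a` satisfies `x ⊓ b ≠ 0`. -/
def LenzArrow (a b : S) : Prop := ∀ x : S, x ≠ 0 → x ≤ a → x ⊓ b ≠ 0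

/-- A filter: a nonempty, downward directed, upward closed subset not containing `0`. -/
def IsFilt (F : Set S) : Prop :=
  F.Nonempty ∧ (0 : S) ∉ F ∧
  (∀ x ∈ F, ∀ y : S, x ≤ y → y ∈ F) ∧
  (∀ x ∈ F, ∀ y ∈ F, ∃ z ∈ F, z ≤ x ∧ z ≤ y)

/-- An ultrafilter: a maximal filter. -/
def IsUltra (F : Set S) : Prop :=
  IsFilt F ∧ ∀ G : Set S, IsFilt G → F ⊆ G → G = F

/-- The upward closure of a set. -/
def upClo (X : Set S) : Set S := {y : S | ∃ x ∈ X, x ≤ y}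

/-- A filter in the semilattice `E(S)` of idempotents of `S`: a nonempty,
downward directed, upward closed (within the idempotents) set of nonzero
idempotents. -/
def IsFiltIdem (F : Set S) : Prop :=
  (∀ x ∈ F, x * x = x) ∧ F.Nonempty ∧ (0 : S) ∉ F ∧
  (∀ x ∈ F, ∀ y : S, y * y = y → x ≤ y → y ∈ F) ∧
  (∀ x ∈ F, ∀ y ∈ F, ∃ z ∈ F, z ≤ x ∧ z ≤ y)

/-- An ultrafilter in `E(S)`: a maximal filter of idempotents. -/
def IsUltraIdem (F : Set S) : Prop :=
  IsFiltIdem F ∧ ∀ G : Set S, IsFiltIdem G → F ⊆ G → G = F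

/-! In an inverse semigroup everything below an idempotent is idempotent, so a filter `F`
containing an idempotent is the upward closure of its idempotents `E(F)`. Conversely the
upward closure of a filter of idempotents is a filter of `S`. Thus `E(-)` and `(-)↑` are
mutually inverse, inclusion-preserving maps between idempotent filters of `S` and filters of
`E(S)`, and maximality transfers in both directions. -/

namespace InverseMeetSemigroup

theorem isIdempotentElem_inv_mul_self (a : S) : IsIdempotentElem (a⁻¹ * a) := by
  rw [IsIdempotentElem, ← mul_assoc, inv_mul_inv]

/-- Below an idempotent `e` we have `a = e * (a⁻¹ * a)`, a product of commuting idempotents. -/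
theorem isIdempotentElem_of_le {a e : S} (he : IsIdempotentElem e) (h : a ≤ e) :
    IsIdempotentElem a := by
  have hdom := isIdempotentElem_inv_mul_self a
  rw [le_iff] at h
  rw [h]
  exact he.mul_of_commute (idem_comm _ _ he hdom) hdom

theorem eq_zero_of_le_zero {a : S} (h : a ≤ 0) : a = 0 := by
  rwa [le_iff, zero_mul] at h

end InverseMeetSemigroup

open InverseMeetSemigroup

theorem subset_upClo (X : Set S) : X ⊆ upClo X :=
  fun x hx => ⟨x, hx, le_rfl⟩

theorem upClo_mono {X Y : Set S} (h : X ⊆ Y) : upClo X ⊆ upClo Y :=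
  fun _ ⟨x, hx, hxy⟩ => ⟨x, h hx, hxy⟩

theorem IsFiltIdem.isFilt_upClo {G : Set S} (hG : IsFiltIdem G) : IsFilt (upClo G) := by
  obtain ⟨-, ⟨x, hx⟩, h0, -, hdir⟩ := hG
  refine ⟨⟨x, subset_upClo G hx⟩, ?_, ?_, ?_⟩
  · rintro ⟨z, hz, hz0⟩
    exact h0 (eq_zero_of_le_zero hz0 ▸ hz)
  · rintro x ⟨g, hg, hgx⟩ y hxy
    exact ⟨g, hg, hgx.trans hxy⟩
  · rintro x ⟨g, hg, hgx⟩ y ⟨h, hh, hhy⟩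
    obtain ⟨k, hk, hkg, hkh⟩ := hdir g hg h hh
    exact ⟨k, subset_upClo G hk, hkg.trans hgx, hkh.trans hhy⟩

namespace IsFilt

variable {F : Set S}

theorem isFiltIdem_idempotents (hF : IsFilt F) (hidem : ∃ e ∈ F, e * e = e) :
    IsFiltIdem {e ∈ F | e * e = e} := by
  obtain ⟨-, h0, hup, hdir⟩ := hF
  refine ⟨fun x hx => hx.2, hidem, fun h => h0 h.1, ?_, ?_⟩
  · exact fun x hx y hy hxy => ⟨hup x hx.1 y hxy, hy⟩
  · intro x hx y hy
    obtain ⟨z, hz, hzx, hzy⟩ := hdir x hx.1 y hy.1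
    exact ⟨z, ⟨hz, isIdempotentElem_of_le hx.2 hzx⟩, hzx, hzy⟩

theorem eq_upClo_idempotents (hF : IsFilt F) (hidem : ∃ e ∈ F, e * e = e) :
    F = upClo {e ∈ F | e * e = e} := by
  obtain ⟨-, -, hup, hdir⟩ := hF
  refine Set.Subset.antisymm (fun a ha => ?_) fun a ⟨x, hx, hxa⟩ => hup x hx.1 a hxa
  obtain ⟨e, he, hee⟩ := hidem
  obtain ⟨z, hz, hza, hze⟩ := hdir a ha e he
  exact ⟨z, ⟨hz, isIdempotentElem_of_le hee hze⟩, hza⟩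

theorem isUltra_of_isUltraIdem_idempotents (hF : IsFilt F) (hidem : ∃ e ∈ F, e * e = e)
    (hE : IsUltraIdem {e ∈ F | e * e = e}) : IsUltra F := by
  refine ⟨hF, fun G hG hFG => ?_⟩
  have hGidem : ∃ e ∈ G, e * e = e := hidem.imp fun _ ⟨he, hee⟩ => ⟨hFG he, hee⟩
  have hEq : {e ∈ G | e * e = e} = {e ∈ F | e * e = e} :=
    hE.2 _ (hG.isFiltIdem_idempotents hGidem) fun x hx => ⟨hFG hx.1, hx.2⟩
  rw [hG.eq_upClo_idempotents hGidem, hEq, ← hF.eq_upClo_idempotents hidem]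

end IsFilt

theorem IsUltra.isUltraIdem_idempotents {F : Set S} (hF : IsUltra F)
    (hidem : ∃ e ∈ F, e * e = e) : IsUltraIdem {e ∈ F | e * e = e} := by
  obtain ⟨hF, hmax⟩ := hF
  refine ⟨hF.isFiltIdem_idempotents hidem, fun G hG hsub => ?_⟩
  have hFG : F ⊆ upClo G := hF.eq_upClo_idempotents hidem ▸ upClo_mono hsub
  have hGF : upClo G = F := hmax _ hG.isFilt_upClo hFG
  exact Set.Subset.antisymm (fun x hx => ⟨hGF ▸ subset_upClo G hx, hG.1 x hx⟩) hsub

/-- If `F` is an idempotent filter in `S` then its set of idempotents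
`E(F)` is a filter in `E(S)`, `F = E(F)↑`, and `F` is an ultrafilter in
`S` iff `E(F)` is an ultrafilter in `E(S)`. -/
theorem idempotent_filter_props (F : Set S) (hF : IsFilt F)
    (hidem : ∃ e ∈ F, e * e = e) :
    IsFiltIdem {e ∈ F | e * e = e} ∧
    F = upClo {e ∈ F | e * e = e} ∧
    (IsUltra F ↔ IsUltraIdem {e ∈ F | e * e = e}) :=
  ⟨hF.isFiltIdem_idempotents hidem, hF.eq_upClo_idempotents hidem,
    fun hU => hU.isUltraIdem_idempotents hidem,
    hF.isUltra_of_isUltraIdem_idempotents hidem⟩
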